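/- Let φ_1, ..., φ_s be free prenex pp-formulas over a common signature that are pairwise counting inequivalent but pairwise semi-counting equivalent, and let A_i be the structure of φ_i. Then the structures A_1, ..., A_s are pairwise not homomorphically equivalent. -/

import Mathlib

structure Signature where
  symb : Type
  ar : symb → ℕ

structure Struc (σ : Signature) where
  carrier : Type
  rel : ∀ r : σ.symb, (Fin (σ.ar r) → carrier) → Prop

def IsHom {σ : Signature} (A B : Struc σ) (h : A.carrier → B.carrier) : Prop :=
  ∀ r t, A.rel r t → B.rel r (h ∘ t)

def ppSet {σ : Signature} (A : Struc σ) (S : Set A.carrier) (B : Struc σ) :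
    Set (S → B.carrier) :=
  {f | ∃ h : A.carrier → B.carrier, IsHom A B h ∧ ∀ s : S, h s = f s}

noncomputable def ppCount {σ : Signature} (A : Struc σ) (S : Set A.carrier)
    (B : Struc σ) : ℕ :=
  Nat.card (ppSet A S B)

def CountEquiv {σ : Signature} (A₁ : Struc σ) (S₁ : Set A₁.carrier)
    (A₂ : Struc σ) (S₂ : Set A₂.carrier) : Prop :=
  ∀ B : Struc σ, Finite B.carrier → ppCount A₁ S₁ B = ppCount A₂ S₂ B

def SemiCountEquiv {σ : Signature} (A₁ : Struc σ) (S₁ : Set A₁.carrier)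
    (A₂ : Struc σ) (S₂ : Set A₂.carrier) : Prop :=
  ∀ B : Struc σ, Finite B.carrier → 0 < ppCount A₁ S₁ B → 0 < ppCount A₂ S₂ B →
    ppCount A₁ S₁ B = ppCount A₂ S₂ B

def ppGraph {σ : Signature} (A : Struc σ) : SimpleGraph A.carrier where
  Adj x y := x ≠ y ∧ ∃ r t, A.rel r t ∧ (∃ i, t i = x) ∧ (∃ j, t j = y)
  symm := by
    constructor
    rintro x y ⟨hxy, r, t, h, hi, hj⟩
    exact ⟨Ne.symm hxy, r, t, h, hj, hi⟩
  loopless := by constructor; rintro x ⟨h, -⟩; exact h rfl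

def hatStruc {σ : Signature} (A : Struc σ) (S : Set A.carrier) : Struc σ :=
  ⟨A.carrier, fun r t => A.rel r t ∧ ∃ i, ∃ s ∈ S, (ppGraph A).Reachable (t i) s⟩

def compStruc {σ : Signature} (A : Struc σ) (c : (ppGraph A).ConnectedComponent) :
    Struc σ :=
  ⟨{a : A.carrier // (ppGraph A).connectedComponentMk a = c},
   fun r t => A.rel r (fun i => (t i).1)⟩

def prodStruc {σ : Signature} (B C : Struc σ) : Struc σ :=
  ⟨B.carrier × C.carrier,
   fun r t => B.rel r (fun i => (t i).1) ∧ C.rel r (fun i => (t i).2)⟩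

/-! Over finite structures, `ppCount A S B` is positive exactly when there is a homomorphism
`A → B`, and composing with homomorphisms `A₁ ⇄ A₂` shows that this does not distinguish
homomorphically equivalent structures. So for such a pair the two counts on `B` are either both
zero or both positive, and in the latter case semi-counting equivalence makes them equal: the
formulas would be counting equivalent. -/

lemma IsHom.comp {σ : Signature} {A B C : Struc σ} {g : B.carrier → C.carrier}
    {f : A.carrier → B.carrier} (hg : IsHom B C g) (hf : IsHom A B f) :
    IsHom A C (g ∘ f) := fun r t h => hg r (f ∘ t) (hf r t h)

lemma ppSet_nonempty_iff {σ : Signature} (A : Struc σ) (S : Set A.carrier) (B : Struc σ) :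
    (ppSet A S B).Nonempty ↔ ∃ h, IsHom A B h := by
  constructor
  · rintro ⟨-, h, hh, -⟩
    exact ⟨h, hh⟩
  · rintro ⟨h, hh⟩
    exact ⟨fun s => h s, h, hh, fun _ => rfl⟩

lemma ppCount_pos_iff {σ : Signature} (A : Struc σ) (S : Set A.carrier) (B : Struc σ)
    [Finite S] [Finite B.carrier] : 0 < ppCount A S B ↔ ∃ h, IsHom A B h := by
  rw [ppCount, Nat.card_pos_iff, ← ppSet_nonempty_iff A S B, Set.nonempty_coe_sort]
  exact and_iff_left Subtype.finite

lemma ppCount_pos_iff_of_isHom {σ : Signature} {A₁ A₂ : Struc σ} (S₁ : Set A₁.carrier)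
    (S₂ : Set A₂.carrier) (B : Struc σ) [Finite S₁] [Finite S₂] [Finite B.carrier]
    {h₁₂ : A₁.carrier → A₂.carrier} {h₂₁ : A₂.carrier → A₁.carrier}
    (hh₁₂ : IsHom A₁ A₂ h₁₂) (hh₂₁ : IsHom A₂ A₁ h₂₁) :
    0 < ppCount A₁ S₁ B ↔ 0 < ppCount A₂ S₂ B := by
  rw [ppCount_pos_iff, ppCount_pos_iff]
  exact ⟨fun ⟨g, hg⟩ => ⟨g ∘ h₂₁, hg.comp hh₂₁⟩, fun ⟨g, hg⟩ => ⟨g ∘ h₁₂, hg.comp hh₁₂⟩⟩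

lemma SemiCountEquiv.countEquiv_of_isHom {σ : Signature} {A₁ A₂ : Struc σ}
    {S₁ : Set A₁.carrier} {S₂ : Set A₂.carrier} [Finite S₁] [Finite S₂]
    (hsce : SemiCountEquiv A₁ S₁ A₂ S₂)
    {h₁₂ : A₁.carrier → A₂.carrier} {h₂₁ : A₂.carrier → A₁.carrier}
    (hh₁₂ : IsHom A₁ A₂ h₁₂) (hh₂₁ : IsHom A₂ A₁ h₂₁) :
    CountEquiv A₁ S₁ A₂ S₂ := by
  intro B hB
  have hpos := ppCount_pos_iff_of_isHom S₁ S₂ B hh₁₂ hh₂₁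
  by_cases h₁ : 0 < ppCount A₁ S₁ B
  · exact hsce B hB h₁ (hpos.1 h₁)
  · rw [Nat.eq_zero_of_not_pos h₁, Nat.eq_zero_of_not_pos (hpos.not.1 h₁)]

theorem stmt19_general (σ : Signature) (s : ℕ) (A : Fin s → Struc σ)
    (S : ∀ i, Set (A i).carrier)
    (hfin : ∀ i, Finite (A i).carrier)
    (hnce : ∀ i j, i ≠ j → ¬ CountEquiv (A i) (S i) (A j) (S j))
    (hsce : ∀ i j, SemiCountEquiv (A i) (S i) (A j) (S j)) :
    ∀ i j, i ≠ j →
      ¬ ((∃ h, IsHom (A i) (A j) h) ∧ (∃ h, IsHom (A j) (A i) h)) := by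
  rintro i j hij ⟨⟨h₁₂, hh₁₂⟩, ⟨h₂₁, hh₂₁⟩⟩
  have := hfin i
  have := hfin j
  exact hnce i j hij ((hsce i j).countEquiv_of_isHom hh₁₂ hh₂₁)

/-- If free prenex pp-formulas `φ_i = (A_i, S_i)` are pairwise not counting
equivalent but pairwise semi-counting equivalent, then the structures `A_i`
are pairwise not homomorphically equivalent. -/
theorem stmt19 (σ : Signature) (s : ℕ) (A : Fin s → Struc σ)
    (S : ∀ i, Set (A i).carrier)
    (hfin : ∀ i, Finite (A i).carrier) (hfree : ∀ i, (S i).Nonempty)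
    (hnce : ∀ i j, i ≠ j → ¬ CountEquiv (A i) (S i) (A j) (S j))
    (hsce : ∀ i j, SemiCountEquiv (A i) (S i) (A j) (S j)) :
    ∀ i j, i ≠ j →
      ¬ ((∃ h, IsHom (A i) (A j) h) ∧ (∃ h, IsHom (A j) (A i) h)) :=
  stmt19_general σ s A S hfin hnce hsce
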